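/- If a 2×2 positive semidefinite matrix N on Bob's qubit (system B of ℂ⁴⊗ℂ²⊗ℂ²) satisfies ⟨ψ|(I⊗N⊗I)|ψ'⟩ = 0 for all distinct ψ, ψ' in S₂, then N is diagonal in the computational basis; moreover using the pairs {|1⟩|0+1⟩|1⟩, |1⟩|0−1⟩|1⟩} one gets ⟨0|N|0⟩ = ⟨1|N|1⟩, so N is proportional to the identity. -/

import Mathlib

open scoped BigOperators ComplexOrder

noncomputable section

def e4 (i : Fin 4) : Fin 4 → ℂ := fun j => if j = i then 1 else 0
def dot4 (x y : Fin 4 → ℂ) : ℂ := ∑ i, star (x i) * y i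
def p4 (i j : Fin 4) : Fin 4 → ℂ := ((Real.sqrt 2 : ℂ))⁻¹ • (e4 i + e4 j)
def m4 (i j : Fin 4) : Fin 4 → ℂ := ((Real.sqrt 2 : ℂ))⁻¹ • (e4 i - e4 j)

def e2 (i : Fin 2) : Fin 2 → ℂ := fun j => if j = i then 1 else 0
def dot2 (x y : Fin 2 → ℂ) : ℂ := ∑ i, star (x i) * y i
def p2 : Fin 2 → ℂ := ((Real.sqrt 2 : ℂ))⁻¹ • (e2 0 + e2 1)
def m2 : Fin 2 → ℂ := ((Real.sqrt 2 : ℂ))⁻¹ • (e2 0 - e2 1)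

/-- The tripartite product states of `S₂ ⊂ ℂ⁴⊗ℂ²⊗ℂ²` as (A, B, C) factor triples. -/
def S2 : Fin 14 → (Fin 4 → ℂ) × (Fin 2 → ℂ) × (Fin 2 → ℂ) :=
  ![(e4 0, e2 0, p2), (e4 0, e2 0, m2),
    (e4 0, e2 1, p2), (e4 0, e2 1, m2),
    (p4 1 2, e2 0, e2 0), (m4 1 2, e2 0, e2 0),
    (e4 3, e2 0, e2 0), (e4 1, e2 1, e2 0), (e4 3, e2 1, e2 0),
    (e4 1, p2, e2 1), (e4 1, m2, e2 1),
    (p4 2 3, e2 0, e2 1), (m4 2 3, e2 0, e2 1),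
    (e4 3, e2 1, e2 1)]

/-!
The pairs `|0⟩|0⟩|0+1⟩, |0⟩|1⟩|0+1⟩` (in both orders) agree on the outer factors, so the
condition reads `⟨0|N|1⟩ = ⟨1|N|0⟩ = 0`. The pair `|1⟩|0+1⟩|1⟩, |1⟩|0−1⟩|1⟩` then gives
`0 = ⟨0+1|N|0−1⟩ = (N₀₀ − N₁₁) / 2`.
-/

lemma inv_sqrt_two_mul_self : ((Real.sqrt 2 : ℂ))⁻¹ * ((Real.sqrt 2 : ℂ))⁻¹ = 1 / 2 := by
  rw [← mul_inv, ← Complex.ofReal_mul, Real.mul_self_sqrt zero_le_two]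
  norm_num

lemma dot4_e4_self (i : Fin 4) : dot4 (e4 i) (e4 i) = 1 := by
  simp [dot4, e4]

lemma dot2_e2_self (i : Fin 2) : dot2 (e2 i) (e2 i) = 1 := by
  simp [dot2, e2]

lemma dot2_p2_self : dot2 p2 p2 = 1 := by
  simp only [dot2, p2, Pi.smul_apply, Pi.add_apply, e2, smul_eq_mul, star_mul', star_inv₀,
    RCLike.star_def, Complex.conj_ofReal, star_add, MonoidWithZeroHom.map_ite_one_zero,
    Fin.sum_univ_two, ↓reduceIte, zero_ne_one, add_zero, mul_one, one_ne_zero, zero_add]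
  linear_combination 2 * inv_sqrt_two_mul_self

lemma dot2_e2_mulVec_e2 (A : Matrix (Fin 2) (Fin 2) ℂ) (i j : Fin 2) :
    dot2 (e2 i) (A.mulVec (e2 j)) = A i j := by
  simp [dot2, e2, Matrix.mulVec, dotProduct]

lemma dot2_p2_mulVec_m2 (A : Matrix (Fin 2) (Fin 2) ℂ) :
    dot2 p2 (A.mulVec m2) = (A 0 0 - A 0 1 + A 1 0 - A 1 1) / 2 := by
  simp only [dot2, p2, Pi.smul_apply, Pi.add_apply, e2, smul_eq_mul, star_mul', star_inv₀,
    RCLike.star_def, Complex.conj_ofReal, star_add, MonoidWithZeroHom.map_ite_one_zero,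
    Matrix.mulVec, dotProduct, m2, Pi.sub_apply, Fin.sum_univ_two, ↓reduceIte, zero_ne_one,
    sub_zero, mul_one, one_ne_zero, zero_sub, mul_neg, add_zero, zero_add]
  linear_combination (A 0 0 - A 0 1 + A 1 0 - A 1 1) * inv_sqrt_two_mul_self

lemma Matrix.eq_smul_one_of_fin_two {R : Type*} [CommRing R] (A : Matrix (Fin 2) (Fin 2) R)
    (h01 : A 0 1 = 0) (h10 : A 1 0 = 0) (hd : A 0 0 = A 1 1) : A = A 0 0 • 1 := by
  ext i j
  fin_cases i <;> fin_cases j <;> simp [h01, h10, hd]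

theorem stmt18_general (N : Matrix (Fin 2) (Fin 2) ℂ)
    (h : ∀ i j : Fin 14, i ≠ j →
      dot4 (S2 i).1 (S2 j).1 * dot2 (S2 i).2.1 (N.mulVec (S2 j).2.1)
        * dot2 (S2 i).2.2 (S2 j).2.2 = 0) :
    (∀ i j : Fin 2, i ≠ j → N i j = 0) ∧ N 0 0 = N 1 1 ∧
      ∃ c : ℂ, N = c • (1 : Matrix (Fin 2) (Fin 2) ℂ) := by
  have h01 : N 0 1 = 0 := by
    have h02 : dot4 (e4 0) (e4 0) * dot2 (e2 0) (N.mulVec (e2 1)) * dot2 p2 p2 = 0 :=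
      h 0 2 (by decide)
    rwa [dot4_e4_self, dot2_e2_mulVec_e2, dot2_p2_self, one_mul, mul_one] at h02
  have h10 : N 1 0 = 0 := by
    have h20 : dot4 (e4 0) (e4 0) * dot2 (e2 1) (N.mulVec (e2 0)) * dot2 p2 p2 = 0 :=
      h 2 0 (by decide)
    rwa [dot4_e4_self, dot2_e2_mulVec_e2, dot2_p2_self, one_mul, mul_one] at h20
  have hd : N 0 0 = N 1 1 := by
    have h910 : dot4 (e4 1) (e4 1) * dot2 p2 (N.mulVec m2) * dot2 (e2 1) (e2 1) = 0 :=
      h 9 10 (by decide)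
    rw [dot4_e4_self, dot2_p2_mulVec_m2, dot2_e2_self, h01, h10] at h910
    linear_combination 2 * h910
  refine ⟨fun i j hij => ?_, hd, N 0 0, N.eq_smul_one_of_fin_two h01 h10 hd⟩
  fin_cases i <;> fin_cases j <;> simp_all

/-- if a 2×2 PSD matrix `N` on Bob's qubit satisfies
`⟨ψ|(I⊗N⊗I)|ψ'⟩ = 0` for all distinct `ψ, ψ' ∈ S₂`, then `N` is diagonal with
`⟨0|N|0⟩ = ⟨1|N|1⟩`, hence proportional to the identity. -/
theorem stmt18 (N : Matrix (Fin 2) (Fin 2) ℂ) (hN : N.PosSemidef)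
    (h : ∀ i j : Fin 14, i ≠ j →
      dot4 (S2 i).1 (S2 j).1 * dot2 (S2 i).2.1 (N.mulVec (S2 j).2.1)
        * dot2 (S2 i).2.2 (S2 j).2.2 = 0) :
    (∀ i j : Fin 2, i ≠ j → N i j = 0) ∧ N 0 0 = N 1 1 ∧
      ∃ c : ℂ, N = c • (1 : Matrix (Fin 2) (Fin 2) ℂ) :=
  stmt18_general N h

end
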